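/- arXiv:2405.08943 — 2 statements merged into one kernel-verified Lean document; each statement's English description precedes it below -/
import Mathlib

section
/- The middle order P_n is graded, with rank function given by the number of inversions: for any w ∈ S_n, every maximal chain from the identity to w in P_n has length equal to inv(w) = Σ_i I(w)_i. -/
/-!
Reading positions off from the largest value downward shows that `invSeq` is injective, and
counting then makes it a bijection onto the sequences `e` with `e i ≤ i`. So the middle order is
the product of the chains `{0, …, i}`, in which a cover raises a single coordinate by one; hence
each cover raises `inversions w = ∑ i, invSeq w i` by exactly one.
-/

/-- The inversion sequence of a permutation `w` of `Fin n` (0-indexed values):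
`invSeq w i` counts the values `j < i` appearing after `i` in one-line notation. -/
def invSeq {n : ℕ} (w : Equiv.Perm (Fin n)) (i : Fin n) : ℕ :=
  (Finset.univ.filter (fun j : Fin n => j < i ∧ w.symm i < w.symm j)).card

/-- The middle order on permutations: coordinate-wise comparison of inversion sequences. -/
def midLe {n : ℕ} (v w : Equiv.Perm (Fin n)) : Prop :=
  ∀ i, invSeq v i ≤ invSeq w i

/-- Number of inversions of a permutation. -/
def inversions {n : ℕ} (w : Equiv.Perm (Fin n)) : ℕ :=
  (Finset.univ.filter (fun p : Fin n × Fin n => p.1 < p.2 ∧ w p.2 < w p.1)).card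

/-- `v` is covered by `w` in the middle order. -/
def midCovBy {n : ℕ} (v w : Equiv.Perm (Fin n)) : Prop :=
  midLe v w ∧ v ≠ w ∧ ∀ u, midLe v u → midLe u w → u = v ∨ u = w

open Finset

variable {n : ℕ}

lemma invSeq_le (w : Equiv.Perm (Fin n)) (i : Fin n) : invSeq w i ≤ i :=
  calc invSeq w i ≤ #(Iio i) := card_le_card fun j hj => by simpa using (mem_filter.1 hj).2.1
    _ = i := Fin.card_Iio i

lemma sum_invSeq (w : Equiv.Perm (Fin n)) : ∑ i, invSeq w i = inversions w := by
  simp only [invSeq, inversions, ← card_sigma]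
  refine card_bij' (fun x _ => (w.symm x.1, w.symm x.2)) (fun p _ => ⟨w p.1, w p.2⟩)
    ?_ ?_ ?_ ?_ <;> simp +contextual

lemma card_filter_lt_apply (σ : Equiv.Perm (Fin n)) (x : Fin n) :
    #{j | x < σ j} = n - 1 - x := by
  rw [card_filter, Equiv.sum_comp σ (fun j => if x < j then 1 else 0), ← card_filter,
    filter_lt_eq_Ioi, Fin.card_Ioi]

lemma lt_add_card_filter_lt {S : Finset (Fin n)} {a b : Fin n} (hab : a < b) (hb : b ∉ S) :
    (a : ℕ) + #{s ∈ S | a < s} < b + #{s ∈ S | b < s} := by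
  have hsplit : {s ∈ S | a < s} ⊆ {s ∈ S | b < s} ∪ Ioo a b := by
    intro s hs
    simp only [mem_filter, mem_union, mem_Ioo] at hs ⊢
    rcases lt_trichotomy s b with h | rfl | h
    · exact .inr ⟨hs.2, h⟩
    · exact absurd hs.1 hb
    · exact .inl ⟨hs.1, h⟩
  have := (card_le_card hsplit).trans (card_union_le _ _)
  rw [Fin.card_Ioo] at this
  have : (a : ℕ) < b := hab
  omega

lemma eq_of_add_card_filter_lt_eq {S : Finset (Fin n)} {a b : Fin n} (ha : a ∉ S) (hb : b ∉ S)
    (h : (a : ℕ) + #{s ∈ S | a < s} = b + #{s ∈ S | b < s}) : a = b := by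
  rcases lt_trichotomy a b with hab | hab | hab
  · exact absurd h (lt_add_card_filter_lt hab hb).ne
  · exact hab
  · exact absurd h (lt_add_card_filter_lt hab ha).ne'

lemma add_invSeq_add_card (w : Equiv.Perm (Fin n)) (i : Fin n) :
    (w.symm i : ℕ) + invSeq w i + #{s ∈ (Ioi i).image w.symm | w.symm i < s} = n - 1 := by
  have hsplit : #{j | w.symm i < w.symm j} =
      invSeq w i + #{s ∈ (Ioi i).image w.symm | w.symm i < s} := by
    rw [invSeq, filter_image, card_image_of_injective _ w.symm.injective, ← card_union_of_disjoint]
    · congr 1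
      ext j
      simp only [mem_filter, mem_univ, true_and, mem_union, mem_Ioi]
      constructor
      · intro h
        rcases lt_trichotomy j i with hji | rfl | hji
        · exact .inl ⟨hji, h⟩
        · exact absurd h (lt_irrefl _)
        · exact .inr ⟨hji, h⟩
      · rintro (h | h) <;> exact h.2
    · refine disjoint_left.2 fun j h h' => ?_
      simp only [mem_filter, mem_univ, true_and, mem_Ioi] at h h'
      exact lt_asymm h.1 h'.1
  have := card_filter_lt_apply w.symm (w.symm i)
  have := (w.symm i).isLt
  omega

/-- Once the positions of the values above `i` are known, the position `x` of `i` is the unique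
point off them with `x + #{larger known positions} = n - 1 - invSeq w i`. -/
lemma symm_apply_eq_of_invSeq_eq {v w : Equiv.Perm (Fin n)} {i : Fin n}
    (hi : invSeq v i = invSeq w i) (htail : ∀ j, i < j → v.symm j = w.symm j) :
    v.symm i = w.symm i := by
  have himage : (Ioi i).image v.symm = (Ioi i).image w.symm :=
    image_congr fun j hj => htail j (mem_Ioi.1 hj)
  have hv := add_invSeq_add_card v i
  have hw := add_invSeq_add_card w i
  rw [himage] at hv
  have not_mem_image (u : Equiv.Perm (Fin n)) : u.symm i ∉ (Ioi i).image u.symm := by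
    simp [u.symm.injective.eq_iff]
  exact eq_of_add_card_filter_lt_eq (himage ▸ not_mem_image v) (not_mem_image w) (by omega)

lemma invSeq_injective : Function.Injective (invSeq (n := n)) := by
  intro v w h
  suffices v.symm = w.symm from Equiv.symm_bijective.injective this
  ext1 i
  induction i using WellFoundedGT.induction with
  | _ i ih => exact symm_apply_eq_of_invSeq_eq (congrFun h i) ih

/-- `invSeq` is an injection between two sets of size `n!`. -/
lemma exists_invSeq_eq (e : Fin n → ℕ) (he : ∀ i, e i ≤ i) :
    ∃ w : Equiv.Perm (Fin n), invSeq w = e := by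
  let code : Equiv.Perm (Fin n) → (i : Fin n) → Fin (i + 1) :=
    fun w i => ⟨invSeq w i, Nat.lt_succ_of_le (invSeq_le w i)⟩
  have hinj : Function.Injective code := fun v w h =>
    invSeq_injective <| funext fun i => congrArg Fin.val (congrFun h i)
  have hcard : Fintype.card (Equiv.Perm (Fin n)) = Fintype.card ((i : Fin n) → Fin (i + 1)) := by
    simp [Fintype.card_perm, Fin.prod_univ_eq_prod_range (· + 1) n,
      prod_range_add_one_eq_factorial]
  obtain ⟨w, hw⟩ := ((Fintype.bijective_iff_injective_and_card code).2 ⟨hinj, hcard⟩).2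
    fun i => ⟨e i, Nat.lt_succ_of_le (he i)⟩
  exact ⟨w, funext fun i => congrArg Fin.val (congrFun hw i)⟩

lemma inversions_one : inversions (1 : Equiv.Perm (Fin n)) = 0 := by
  simp only [inversions, card_eq_zero, filter_eq_empty_iff]
  rintro ⟨a, b⟩ - ⟨hab, hba⟩
  exact lt_asymm hab hba

/-- A cover raises exactly one entry of the inversion sequence, by one: otherwise raising a
single entry by one gives, via `exists_invSeq_eq`, an element strictly in between. -/
lemma inversions_eq_add_one_of_midCovBy {v w : Equiv.Perm (Fin n)} (h : midCovBy v w) :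
    inversions w = inversions v + 1 := by
  obtain ⟨hle, hne, hcov⟩ := h
  obtain ⟨i, hi⟩ : ∃ i, invSeq v i < invSeq w i := by
    by_contra! hge
    exact hne (invSeq_injective (funext fun i => (hle i).antisymm (hge i)))
  obtain ⟨u, hu⟩ := exists_invSeq_eq (Function.update (invSeq v) i (invSeq v i + 1)) fun j => by
    rcases eq_or_ne j i with rfl | hji
    · simpa using hi.trans_le (invSeq_le w j)
    · simpa [hji] using invSeq_le v j
  have hvu : midLe v u := fun j => by
    rcases eq_or_ne j i with rfl | hji
    · simp [hu]
    · simp [hu, hji]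
  have huw : midLe u w := fun j => by
    rcases eq_or_ne j i with rfl | hji
    · simpa [hu] using hi
    · simpa [hu, hji] using hle j
  rcases hcov u hvu huw with rfl | rfl
  · simpa using congrFun hu i
  · rw [← sum_invSeq, ← sum_invSeq, hu, sum_update_of_mem (mem_univ i),
      ← add_sum_erase _ _ (mem_univ i), sdiff_singleton_eq_erase]
    ring

/-- The middle order is graded by the number of inversions: every maximal (saturated)
chain from the identity to `w` has length `inv(w)`. -/
theorem middle_order_graded (n : ℕ) (w : Equiv.Perm (Fin n)) (m : ℕ)
    (c : Fin (m + 1) → Equiv.Perm (Fin n))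
    (h0 : c 0 = 1) (hlast : c (Fin.last m) = w)
    (hcov : ∀ i : Fin m, midCovBy (c i.castSucc) (c i.succ)) :
    m = inversions w := by
  have hrank (k : Fin (m + 1)) : inversions (c k) = k := by
    induction k using Fin.induction with
    | zero => simp [h0, inversions_one]
    | succ k ih => simp [inversions_eq_add_one_of_midCovBy (hcov k), ih]
  simpa [hlast] using (hrank (Fin.last m)).symm
end

section
/- The Möbius function of the middle order P_n satisfies: μ(v,w) = (−1)^t if [v,w] is a boolean interval of rank t (i.e., I(w)_i − I(v)_i ∈ {0,1} for all i, with t indices of difference 1), and μ(v,w) = 0 otherwise. In particular, for the identity e_n, μ(e_n, w) = 0 unless every entry of I(w) is 0 or 1, in which case μ(e_n,w) = (−1)^{inv(w)}. -/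
namespace MidAux

open Finset Equiv

variable {n : ℕ}

lemma invSeq_le (w : Perm (Fin n)) (i : Fin n) : invSeq w i ≤ i.val := by
  classical
  have h : (Finset.univ.filter (fun j : Fin n => j < i ∧ w.symm i < w.symm j))
      ⊆ Finset.Iio i := by
    intro j hj
    simp only [mem_filter, mem_univ, true_and] at hj
    simpa using hj.1
  calc invSeq w i ≤ #(Finset.Iio i) := Finset.card_le_card h
    _ = i.val := by simp

lemma card_aux (u : Perm (Fin n)) (i : Fin n) :
    invSeq u i + #(Finset.univ.filter fun j : Fin n => i < j ∧ u.symm i < u.symm j)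
      = n - 1 - (u.symm i).val := by
  classical
  have hunion : (Finset.univ.filter fun j : Fin n => j < i ∧ u.symm i < u.symm j)
      ∪ (Finset.univ.filter fun j : Fin n => i < j ∧ u.symm i < u.symm j)
      = Finset.univ.filter fun j : Fin n => j ≠ i ∧ u.symm i < u.symm j := by
    ext j
    simp only [mem_union, mem_filter, mem_univ, true_and, Fin.lt_def, ne_eq, Fin.ext_iff]
    omega
  have hdisj : Disjoint (Finset.univ.filter fun j : Fin n => j < i ∧ u.symm i < u.symm j)
      (Finset.univ.filter fun j : Fin n => i < j ∧ u.symm i < u.symm j) := by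
    rw [Finset.disjoint_left]
    intro j h1 h2
    simp only [mem_filter, mem_univ, true_and] at h1 h2
    exact absurd h2.1 (lt_asymm h1.1)
  have hcard : #(Finset.univ.filter fun j : Fin n => j ≠ i ∧ u.symm i < u.symm j)
      = #(Finset.Ioi (u.symm i)) := by
    apply Finset.card_bij (fun j _ => u.symm j)
    · intro a ha
      simp only [mem_filter, mem_univ, true_and] at ha
      simpa using ha.2
    · intro a _ b _ hab
      exact u.symm.injective hab
    · intro p hp
      simp only [Finset.mem_Ioi] at hp
      refine ⟨u p, ?_, by simp⟩
      simp only [mem_filter, mem_univ, true_and, Equiv.symm_apply_apply]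
      refine ⟨?_, hp⟩
      intro hcon
      have hpe : p = u.symm i := by rw [← hcon, Equiv.symm_apply_apply]
      rw [hpe] at hp
      exact lt_irrefl _ hp
  have : invSeq u i = #(Finset.univ.filter fun j : Fin n => j < i ∧ u.symm i < u.symm j) := rfl
  rw [this, ← Finset.card_union_of_disjoint hdisj, hunion, hcard, Fin.card_Ioi]

lemma key_lemma (v w : Perm (Fin n)) (h : invSeq v = invSeq w) (i : Fin n)
    (hmax : ∀ j, i < j → v.symm j = w.symm j) (hab : v.symm i < w.symm i) : False := by
  classical
  have e1 := card_aux v i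
  have e2 := card_aux w i
  have hA : (Finset.univ.filter fun j : Fin n => i < j ∧ v.symm i < v.symm j)
      = (Finset.univ.filter fun j : Fin n => i < j ∧ v.symm i < w.symm j) := by
    apply Finset.filter_congr
    intro j _
    by_cases hj : i < j
    · rw [hmax j hj]
    · simp [hj]
  have hsplit : (Finset.univ.filter fun j : Fin n => i < j ∧ v.symm i < w.symm j)
      = (Finset.univ.filter fun j : Fin n => i < j ∧ v.symm i < w.symm j ∧ w.symm j < w.symm i)
        ∪ (Finset.univ.filter fun j : Fin n => i < j ∧ w.symm i < w.symm j) := by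
    ext j
    simp only [mem_union, mem_filter, mem_univ, true_and]
    have hne : i < j → (w.symm j).val ≠ (w.symm i).val := by
      intro hj hcon
      have : w.symm j = w.symm i := Fin.ext hcon
      exact (ne_of_gt hj) (w.symm.injective this)
    simp only [Fin.lt_def]
    by_cases hj : (i : ℕ) < (j : ℕ)
    · have := hne (Fin.lt_def.mpr hj); omega
    · omega
  have hdisj2 : Disjoint
      (Finset.univ.filter fun j : Fin n => i < j ∧ v.symm i < w.symm j ∧ w.symm j < w.symm i)
      (Finset.univ.filter fun j : Fin n => i < j ∧ w.symm i < w.symm j) := by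
    rw [Finset.disjoint_left]
    intro j h1 h2
    simp only [mem_filter, mem_univ, true_and] at h1 h2
    exact absurd h2.2 (lt_asymm h1.2.2)
  have hC : #(Finset.univ.filter fun j : Fin n =>
        i < j ∧ v.symm i < w.symm j ∧ w.symm j < w.symm i)
      ≤ #(Finset.Ioo (v.symm i) (w.symm i)) := by
    apply Finset.card_le_card_of_injOn (fun j => w.symm j)
    · intro j hj
      simp only [Finset.coe_filter, Finset.mem_coe, mem_filter, mem_univ, true_and, Set.mem_setOf_eq] at hj
      simp only [Finset.mem_coe, Finset.mem_Ioo]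
      exact ⟨hj.2.1, hj.2.2⟩
    · intro x _ y _ hxy
      exact w.symm.injective hxy
  rw [Fin.card_Ioo] at hC
  rw [hA, hsplit, Finset.card_union_of_disjoint hdisj2] at e1
  have hfin : invSeq v i = invSeq w i := congrFun h i
  have hab' : (v.symm i).val < (w.symm i).val := hab
  have hb : (w.symm i).val < n := (w.symm i).isLt
  omega

lemma invSeq_injective : Function.Injective (invSeq (n := n)) := by
  classical
  intro v w h
  by_contra hne
  have hsne : ∃ i, v.symm i ≠ w.symm i := by
    by_contra hc
    push_neg at hc
    apply hne
    apply Equiv.ext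
    intro x
    have h2 := hc (v x)
    rw [Equiv.symm_apply_apply] at h2
    exact ((Equiv.symm_apply_eq w).mp h2.symm)
  set S : Finset (Fin n) := Finset.univ.filter (fun i => v.symm i ≠ w.symm i) with hSdef
  have hS : S.Nonempty := ⟨hsne.choose, by simp [hSdef, hsne.choose_spec]⟩
  set i := S.max' hS with hidef
  have hi : v.symm i ≠ w.symm i := by
    have := S.max'_mem hS
    simpa [hSdef] using this
  have hmax : ∀ j, i < j → v.symm j = w.symm j := by
    intro j hj
    by_contra hc
    exact absurd (S.le_max' j (by simp [hSdef, hc])) (not_le.2 hj)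
  rcases lt_or_gt_of_ne hi with hlt | hlt
  · exact key_lemma v w h i hmax hlt
  · exact key_lemma w v h.symm i (fun j hj => (hmax j hj).symm) hlt

lemma prod_id_succ : ∀ m : ℕ, ∏ i ∈ Finset.range m, (i + 1) = m.factorial := by
  intro m
  induction m with
  | zero => simp
  | succ m ih => rw [Finset.prod_range_succ, ih, Nat.factorial_succ, Nat.mul_comm]

noncomputable def lehmer : Perm (Fin n) ≃ (∀ i : Fin n, Fin (i.val + 1)) :=
  Equiv.ofBijective (fun w i => ⟨invSeq w i, Nat.lt_succ_of_le (invSeq_le w i)⟩) (by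
    rw [Fintype.bijective_iff_injective_and_card]
    constructor
    · intro v w hvw
      apply invSeq_injective
      funext i
      exact congrArg Fin.val (congrFun hvw i)
    · rw [Fintype.card_pi, Fintype.card_perm, Fintype.card_fin]
      simp only [Fintype.card_fin]
      rw [Fin.prod_univ_eq_prod_range (fun i => i + 1) n]
      exact (prod_id_succ n).symm)

lemma lehmer_apply (w : Perm (Fin n)) (i : Fin n) : ((lehmer w) i).val = invSeq w i := rfl

/-- The candidate Möbius values. -/
noncomputable def gfun (a b : ℕ) : ℤ := if b = a then 1 else if b = a + 1 then -1 else 0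

noncomputable def Mv (v w : Perm (Fin n)) : ℤ := ∏ i, gfun (invSeq v i) (invSeq w i)

open scoped Classical in
lemma sum_Mv (v w : Perm (Fin n)) :
    ∑ t ∈ Finset.univ.filter (fun t => midLe v t ∧ midLe t w), Mv v t
      = ∏ i : Fin n, ∑ x ∈ (Finset.univ.filter
          fun x : Fin (i.val + 1) => invSeq v i ≤ x.val ∧ x.val ≤ invSeq w i),
          gfun (invSeq v i) x.val := by
  rw [Finset.prod_univ_sum]
  apply Finset.sum_equiv (lehmer (n := n))
  · intro t
    simp only [mem_filter, mem_univ, true_and, Fintype.mem_piFinset]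
    constructor
    · rintro ⟨h1, h2⟩ i
      simp only [mem_filter, mem_univ, true_and, lehmer_apply]
      exact ⟨h1 i, h2 i⟩
    · intro hx
      constructor
      · intro i
        have := hx i
        simp only [mem_filter, mem_univ, true_and, lehmer_apply] at this
        exact this.1
      · intro i
        have := hx i
        simp only [mem_filter, mem_univ, true_and, lehmer_apply] at this
        exact this.2
  · intro t _
    apply Finset.prod_congr rfl
    intro i _
    rw [lehmer_apply]

lemma inner_sum (k a b : ℕ) (hab : a ≤ b) (hbk : b ≤ k) :
    ∑ x ∈ ((Finset.univ : Finset (Fin (k + 1))).filter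
        fun x => a ≤ x.val ∧ x.val ≤ b), gfun a x.val
      = if b = a then 1 else 0 := by
  classical
  rw [Finset.sum_filter]
  rw [Fin.sum_univ_eq_sum_range (fun m => if a ≤ m ∧ m ≤ b then gfun a m else 0) (k + 1)]
  have h1 : ∀ m, (if a ≤ m ∧ m ≤ b then gfun a m else 0)
      = (if m ∈ Finset.Icc a b then gfun a m else 0) := by
    intro m; simp [Finset.mem_Icc]
  simp_rw [h1]
  rw [Finset.sum_ite_mem]
  have h2 : Finset.range (k + 1) ∩ Finset.Icc a b = Finset.Icc a b := by
    apply Finset.inter_eq_right.mpr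
    intro m hm
    simp only [Finset.mem_Icc] at hm
    simp only [Finset.mem_range]
    omega
  rw [h2]
  have h3 : ∀ m, gfun a m = (if m = a then (1 : ℤ) else 0) + (if m = a + 1 then (-1 : ℤ) else 0) := by
    intro m
    unfold gfun
    split_ifs <;> omega
  simp_rw [h3]
  rw [Finset.sum_add_distrib]
  rw [Finset.sum_ite_eq' (Finset.Icc a b) a (fun _ => (1 : ℤ))]
  rw [Finset.sum_ite_eq' (Finset.Icc a b) (a + 1) (fun _ => (-1 : ℤ))]
  simp only [Finset.mem_Icc]
  split_ifs <;> omega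

open scoped Classical in
lemma Mv_bool (v w : Perm (Fin n))
    (hb : ∀ i, invSeq w i = invSeq v i ∨ invSeq w i = invSeq v i + 1) :
    Mv v w = (-1) ^ (Finset.univ.filter
        (fun i : Fin n => invSeq w i = invSeq v i + 1)).card := by
  rw [Finset.card_filter, ← Finset.prod_pow_eq_pow_sum]
  unfold Mv
  apply Finset.prod_congr rfl
  intro i _
  rcases hb i with h | h
  · rw [h]
    have : invSeq v i ≠ invSeq v i + 1 := by omega
    simp [gfun, this]
  · rw [h]
    have : invSeq v i + 1 ≠ invSeq v i := by omega
    simp [gfun, this]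

lemma Mv_zero (v w : Perm (Fin n))
    (hnb : ¬ ∀ i, invSeq w i = invSeq v i ∨ invSeq w i = invSeq v i + 1) :
    Mv v w = 0 := by
  push_neg at hnb
  obtain ⟨i, hi⟩ := hnb
  apply Finset.prod_eq_zero (Finset.mem_univ i)
  simp only [gfun]
  rw [if_neg hi.1, if_neg hi.2]

lemma Mv_refl (v : Perm (Fin n)) : Mv v v = 1 := by
  unfold Mv gfun
  simp

lemma midLe_refl (v : Perm (Fin n)) : midLe v v := fun _ => le_refl _

open scoped Classical in
lemma mu_eq (μ : Perm (Fin n) → Perm (Fin n) → ℤ)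
    (hrefl : ∀ s, μ s s = 1)
    (hsum : ∀ s u, midLe s u → s ≠ u →
      ∑ t ∈ Finset.univ.filter (fun t => midLe s t ∧ midLe t u), μ s t = 0) :
    ∀ N (v w : Perm (Fin n)), midLe v w → (∑ i, invSeq w i) ≤ N → μ v w = Mv v w := by
  intro N
  induction N with
  | zero =>
    intro v w hle hN
    have hvw : v = w := by
      apply invSeq_injective
      funext i
      have h0 : invSeq w i = 0 := by
        have hz : ∑ i, invSeq w i = 0 := Nat.le_zero.mp hN
        exact (Finset.sum_eq_zero_iff.mp hz) i (Finset.mem_univ i)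
      have := hle i
      omega
    subst hvw
    rw [hrefl, Mv_refl]
  | succ N ih =>
    intro v w hle hN
    by_cases hvw : v = w
    · subst hvw
      rw [hrefl, Mv_refl]
    · have h0 := hsum v w hle hvw
      have hwmem : w ∈ Finset.univ.filter (fun t => midLe v t ∧ midLe t w) := by
        simp [hle, midLe_refl]
      rw [← Finset.add_sum_erase _ _ hwmem] at h0
      have hterm : ∀ t ∈ (Finset.univ.filter (fun t => midLe v t ∧ midLe t w)).erase w,
          μ v t = Mv v t := by
        intro t ht
        obtain ⟨htne, htmem⟩ := Finset.mem_erase.mp ht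
        simp only [mem_filter, mem_univ, true_and] at htmem
        obtain ⟨hvt, htw⟩ := htmem
        apply ih v t hvt
        have hstrict : ∑ i, invSeq t i < ∑ i, invSeq w i := by
          apply Finset.sum_lt_sum (fun i _ => htw i)
          have hne : invSeq t ≠ invSeq w := fun hc => htne (invSeq_injective hc)
          obtain ⟨i, hi⟩ := Function.ne_iff.mp hne
          exact ⟨i, Finset.mem_univ i, lt_of_le_of_ne (htw i) hi⟩
        omega
      rw [Finset.sum_congr rfl hterm] at h0
      have hfull : ∑ t ∈ Finset.univ.filter (fun t => midLe v t ∧ midLe t w), Mv v t = 0 := by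
        rw [sum_Mv]
        have hne : invSeq v ≠ invSeq w := fun hc => hvw (invSeq_injective hc)
        obtain ⟨i, hi⟩ := Function.ne_iff.mp hne
        apply Finset.prod_eq_zero (Finset.mem_univ i)
        rw [inner_sum i.val (invSeq v i) (invSeq w i) (hle i) (invSeq_le w i)]
        rw [if_neg (Ne.symm hi)]
      rw [← Finset.add_sum_erase _ _ hwmem] at hfull
      linear_combination h0 - hfull

lemma invSeq_one (i : Fin n) : invSeq (1 : Perm (Fin n)) i = 0 := by
  classical
  unfold invSeq
  rw [Finset.card_eq_zero]
  apply Finset.filter_false_of_mem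
  intro j _
  simp only [Equiv.Perm.one_symm]
  rintro ⟨h1, h2⟩
  simp only [Equiv.Perm.coe_one, id_eq] at h2
  exact absurd h2 (lt_asymm h1)

lemma inversions_eq_sum (w : Perm (Fin n)) : inversions w = ∑ i, invSeq w i := by
  classical
  have hstep1 : inversions w
      = #(Finset.univ.filter fun q : Fin n × Fin n => q.1 < q.2 ∧ w.symm q.2 < w.symm q.1) := by
    apply Finset.card_bij (fun p _ => (w p.2, w p.1))
    · intro p hp
      simp only [mem_filter, mem_univ, true_and] at hp ⊢
      simpa using ⟨hp.2, hp.1⟩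
    · intro p _ q _ hpq
      simp only [Prod.mk.injEq] at hpq
      have h1 := w.injective hpq.1
      have h2 := w.injective hpq.2
      exact Prod.ext h2 h1
    · intro q hq
      simp only [mem_filter, mem_univ, true_and] at hq
      refine ⟨(w.symm q.2, w.symm q.1), ?_, by simp⟩
      simp only [mem_filter, mem_univ, true_and]
      simpa using ⟨hq.2, hq.1⟩
  rw [hstep1]
  rw [Finset.card_eq_sum_card_fiberwise
    (f := Prod.snd) (t := Finset.univ) (fun q _ => Finset.mem_univ _)]
  apply Finset.sum_congr rfl
  intro i _
  unfold invSeq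
  apply Finset.card_bij (fun q _ => q.1)
  · intro q hq
    simp only [mem_filter, mem_univ, true_and] at hq ⊢
    obtain ⟨⟨h1, h2⟩, h3⟩ := hq
    rw [h3] at h1 h2
    exact ⟨h1, h2⟩
  · intro q hq q' hq' hqq
    simp only [mem_filter, mem_univ, true_and] at hq hq'
    exact Prod.ext hqq (hq.2.trans hq'.2.symm)
  · intro j hj
    simp only [mem_filter, mem_univ, true_and] at hj
    exact ⟨(j, i), by simp [hj.1, hj.2], rfl⟩

end MidAux

open scoped Classical in
/-- The Möbius function of the middle order `P_n`: it is `(-1)^t` on boolean intervals of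
rank `t` and `0` on all other intervals. In particular `μ(e_n, w) = 0` unless every entry
of `I(w)` is `0` or `1`, in which case `μ(e_n, w) = (-1)^{inv(w)}`. -/
theorem middle_order_mobius (n : ℕ) (μ : Equiv.Perm (Fin n) → Equiv.Perm (Fin n) → ℤ)
    (hrefl : ∀ s, μ s s = 1)
    (hnle : ∀ s u, ¬ midLe s u → μ s u = 0)
    (hsum : ∀ s u, midLe s u → s ≠ u →
      ∑ t ∈ Finset.univ.filter (fun t => midLe s t ∧ midLe t u), μ s t = 0) :
    (∀ v w : Equiv.Perm (Fin n), midLe v w →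
      ((∀ i, invSeq w i = invSeq v i ∨ invSeq w i = invSeq v i + 1) →
        μ v w = (-1) ^ (Finset.univ.filter
          (fun i : Fin n => invSeq w i = invSeq v i + 1)).card) ∧
      (¬ (∀ i, invSeq w i = invSeq v i ∨ invSeq w i = invSeq v i + 1) → μ v w = 0)) ∧
    (∀ w : Equiv.Perm (Fin n),
      ((∀ i, invSeq w i ≤ 1) → μ 1 w = (-1) ^ inversions w) ∧
      (¬ (∀ i, invSeq w i ≤ 1) → μ 1 w = 0)) := by
  have hmu : ∀ v w, midLe v w → μ v w = MidAux.Mv v w := fun v w hle =>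
    MidAux.mu_eq μ hrefl hsum (∑ i, invSeq w i) v w hle (le_refl _)
  have part1 : ∀ v w : Equiv.Perm (Fin n), midLe v w →
      ((∀ i, invSeq w i = invSeq v i ∨ invSeq w i = invSeq v i + 1) →
        μ v w = (-1) ^ (Finset.univ.filter
          (fun i : Fin n => invSeq w i = invSeq v i + 1)).card) ∧
      (¬ (∀ i, invSeq w i = invSeq v i ∨ invSeq w i = invSeq v i + 1) → μ v w = 0) := by
    intro v w hle
    constructor
    · intro hb
      rw [hmu v w hle]
      exact MidAux.Mv_bool v w hb
    · intro hnb
      rw [hmu v w hle]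
      exact MidAux.Mv_zero v w hnb
  refine ⟨part1, ?_⟩
  intro w
  have h1le : midLe 1 w := by
    intro i
    rw [MidAux.invSeq_one]
    exact Nat.zero_le _
  constructor
  · intro hb
    have hb' : ∀ i, invSeq w i = invSeq (1 : Equiv.Perm (Fin n)) i ∨
        invSeq w i = invSeq (1 : Equiv.Perm (Fin n)) i + 1 := by
      intro i
      rw [MidAux.invSeq_one]
      have := hb i
      omega
    rw [(part1 1 w h1le).1 hb']
    congr 1
    rw [MidAux.inversions_eq_sum]
    rw [Finset.card_filter]
    apply Finset.sum_congr rfl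
    intro i _
    rw [MidAux.invSeq_one]
    have := hb i
    split_ifs with h
    · omega
    · omega
  · intro hnb
    apply (part1 1 w h1le).2
    intro hc
    apply hnb
    intro i
    have := hc i
    rw [MidAux.invSeq_one] at this
    omega
end
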